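/- arXiv:2510.11540 — 3 statements merged into one kernel-verified Lean document; each statement's English description precedes it below -/
import Mathlib

section
/- Let R be a commutative ring, J = (f1, …, fn) an ideal, and h ∈ R an element integral over J (i.e. h satisfies h^d + a1·h^{d-1} + ⋯ + a_d = 0 with a_i ∈ J^i). Then for each i, the element h/f_i of the localization R[1/f_i] is integral over the subring R_i = R[f1/f_i, …, fn/f_i] of R[1/f_i]. -/
/-!
An equation of integral dependence of `h` over `J` is a monic `p` with
`p.coeff k ∈ J ^ (p.natDegree - k)`. Since `J ^ m` is spanned by monomials of degree `m` in the
`f j`, each `p.coeff k / f i ^ (p.natDegree - k)` lies in `R_i`; these are the coefficients of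
`scaleRoots p (1 / f i)`, a monic polynomial over `R_i` with root `h / f i`.
-/

/-- `h` is integral over the ideal `I`: it satisfies an equation of integral dependence
`h ^ d + a 1 * h ^ (d - 1) + ⋯ + a d = 0` with `a j ∈ I ^ j`. -/
def IdealIntegral {R : Type*} [CommRing R] (I : Ideal R) (h : R) : Prop :=
  ∃ d : ℕ, 0 < d ∧ ∃ a : ℕ → R, (∀ j, 1 ≤ j → j ≤ d → a j ∈ I ^ j) ∧
    h ^ d + ∑ j ∈ Finset.range d, a (j + 1) * h ^ (d - (j + 1)) = 0

open Polynomial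

theorem IdealIntegral.exists_monic_aeval_eq_zero {R : Type*} [CommRing R] {I : Ideal R} {h : R}
    (hh : IdealIntegral I h) :
    ∃ p : R[X], p.Monic ∧ aeval h p = 0 ∧ ∀ k, p.coeff k ∈ I ^ (p.natDegree - k) := by
  obtain ⟨d, -, a, ha, heq⟩ := hh
  set p : R[X] := X ^ d + ∑ k ∈ Finset.range d, C (a (d - k)) * X ^ k
  have hp : p.Monic :=
    monic_X_pow_add (by simp_rw [← Fin.sum_univ_eq_sum_range (fun k => C (a (d - k)) * X ^ k),
      degree_sum_fin_lt])
  have hcoeff : ∀ k, p.coeff k = if k = d then 1 else if k < d then a (d - k) else 0 := by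
    intro k
    simp only [p, coeff_add, coeff_X_pow, finsetSum_coeff, coeff_C_mul_X_pow,
      Finset.sum_ite_eq, Finset.mem_range]
    split_ifs <;> first | omega | simp
  have hdeg : p.natDegree ≤ d :=
    natDegree_le_iff_coeff_eq_zero.mpr fun k hk => by
      rw [hcoeff, if_neg (by omega), if_neg (by omega)]
  refine ⟨p, hp, ?_, fun k => Ideal.pow_le_pow_right (by omega : p.natDegree - k ≤ d - k) ?_⟩
  · rw [← heq, ← Finset.sum_range_reflect]
    simp only [p, map_add, map_pow, aeval_X, map_sum, map_mul, aeval_C, Algebra.algebraMap_self,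
      RingHom.id_apply]
    refine congrArg _ (Finset.sum_congr rfl fun j hj => ?_)
    rw [Finset.mem_range] at hj
    rw [show d - 1 - j + 1 = d - j by omega, show d - (d - j) = j by omega]
  · rw [hcoeff]
    split_ifs with hkd
    · simp [hkd]
    · exact ha _ (by omega) (by omega)
    · exact Submodule.zero_mem _

section adjoin

variable {R A ι : Type*} [CommSemiring R] [CommSemiring A] [Algebra R A] (f : ι → R) (t : A)

theorem algebraMap_mul_mem_adjoin_of_mem_span {a : R} (ha : a ∈ Ideal.span (Set.range f)) :
    algebraMap R A a * t ∈ Algebra.adjoin R (Set.range fun j => algebraMap R A (f j) * t) := by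
  let L : R →ₗ[R] A := (LinearMap.mulRight R t).comp (Algebra.linearMap R A)
  suffices Ideal.span (Set.range f) ≤
      (Algebra.adjoin R (Set.range fun j => algebraMap R A (f j) * t)).toSubmodule.comap L from
    this ha
  rw [Ideal.span_le, Set.range_subset_iff]
  exact fun j => Algebra.subset_adjoin ⟨j, rfl⟩

theorem algebraMap_mul_pow_mem_adjoin_of_mem_span_pow {m : ℕ} {a : R}
    (ha : a ∈ Ideal.span (Set.range f) ^ m) :
    algebraMap R A a * t ^ m ∈ Algebra.adjoin R (Set.range fun j => algebraMap R A (f j) * t) := by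
  induction m generalizing a with
  | zero =>
    rw [pow_zero, mul_one]
    exact Subalgebra.algebraMap_mem _ a
  | succ m ih =>
    rw [pow_succ'] at ha
    refine Submodule.mul_induction_on ha (fun x hx y hy => ?_) (fun x y hx hy => ?_)
    · have := Subalgebra.mul_mem _ (algebraMap_mul_mem_adjoin_of_mem_span f t hx) (ih hy)
      rwa [map_mul, pow_succ', mul_mul_mul_comm]
    · rw [map_add, add_mul]
      exact Subalgebra.add_mem _ hx hy

end adjoin

theorem isIntegral_algebraMap_mul_of_aeval_eq_zero {R A : Type*} [CommRing R] [CommRing A]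
    [Algebra R A] {S : Subalgebra R A} {p : R[X]} (hp : p.Monic) {h : R} (hh : aeval h p = 0)
    {t : A} (hcoeff : ∀ k, algebraMap R A (p.coeff k) * t ^ (p.natDegree - k) ∈ S) :
    IsIntegral S (algebraMap R A h * t) := by
  nontriviality A
  have hmap : (p.map (algebraMap R A)).natDegree = p.natDegree := hp.natDegree_map _
  obtain ⟨q, hqmap, -, hq⟩ := lifts_and_natDegree_eq_and_monic (f := algebraMap S A)
    ((lifts_iff_coeff_lifts _).mpr fun k => ⟨⟨_, hcoeff k⟩, by simp [hmap]⟩)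
    ((monic_scaleRoots_iff t).mpr (hp.map (algebraMap R A)))
  refine ⟨q, hq, ?_⟩
  rw [eval₂_eq_eval_map, hqmap, mul_comm, scaleRoots_eval_mul, eval_map_algebraMap,
    aeval_algebraMap_apply, hh, map_zero, mul_zero]

/-- If `h` is integral over `J = (f 1, …, f n)`, then for each `i` the element `h / f i`
of the localization `R[1/f i]` is integral over the subring
`R_i = R[f 1/f i, …, f n/f i]`. -/
theorem stmt0 {R : Type*} [CommRing R] {n : ℕ} (f : Fin n → R) (h : R)
    (hint : IdealIntegral (Ideal.span (Set.range f)) h) (i : Fin n) :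
    IsIntegral
      (Algebra.adjoin R (Set.range fun j : Fin n =>
        algebraMap R (Localization.Away (f i)) (f j) * Localization.Away.invSelf (f i)))
      (algebraMap R (Localization.Away (f i)) h * Localization.Away.invSelf (f i)) := by
  obtain ⟨p, hp, hph, hcoeff⟩ := hint.exists_monic_aeval_eq_zero
  exact isIntegral_algebraMap_mul_of_aeval_eq_zero hp hph fun k =>
    algebraMap_mul_pow_mem_adjoin_of_mem_span_pow f _ (hcoeff k)
end

section
/- Let R be a commutative ring, J = (f1,…,fn), and suppose h ∈ R is integral over the ideal J. Then in the Rees algebra R[(J,h)t], any homogeneous prime ideal containing f·t for all f ∈ J must also contain h·t. Consequently the chart of the blowup of (J,h) corresponding to h is covered by the charts corresponding to the f_i. -/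
/-!
Let `x = h t`. The equation of integral dependence, multiplied by `tᵈ`, reads
`xᵈ = -∑ (a_{j+1} t^{j+1}) x^{d-j-1}`. Every `a_{j+1} t^{j+1}` with `a_{j+1} ∈ J^{j+1}` is a sum of
products of `j + 1` elements `f t` with `f ∈ J`, hence lies in `P`; so `xᵈ ∈ P` and `x ∈ P` by
primality.
-/

open Polynomial

namespace reesAlgebra

variable {R : Type*} [CommRing R] {I : Ideal R}

def degreeIdeal (P : Ideal (reesAlgebra I)) (k : ℕ) : Ideal R where
  carrier := {a | ∃ ha : a ∈ I ^ k, (⟨monomial k a, monomial_mem.2 ha⟩ : reesAlgebra I) ∈ P}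
  add_mem' := by
    rintro a b ⟨ha, haP⟩ ⟨hb, hbP⟩
    refine ⟨add_mem ha hb, ?_⟩
    convert P.add_mem haP hbP
    simp
  zero_mem' := ⟨zero_mem _, by convert P.zero_mem; simp⟩
  smul_mem' := by
    rintro r a ⟨ha, haP⟩
    refine ⟨Ideal.mul_mem_left _ r ha, ?_⟩
    convert P.mul_mem_left (algebraMap R (reesAlgebra I) r) haP
    simp [C_mul_monomial]

variable {P : Ideal (reesAlgebra I)} {k : ℕ} {a : R}

theorem mem_degreeIdeal_iff :
    a ∈ degreeIdeal P k ↔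
      a ∈ I ^ k ∧ ∀ y : reesAlgebra I, (y : R[X]) = monomial k a → y ∈ P := by
  refine ⟨fun ⟨ha, haP⟩ ↦ ⟨ha, fun y hy ↦ ?_⟩, fun ⟨ha, hP⟩ ↦ ⟨ha, hP _ rfl⟩⟩
  rwa [show y = ⟨monomial k a, monomial_mem.2 ha⟩ from Subtype.ext hy]

theorem mem_of_coe_eq_monomial (ha : a ∈ degreeIdeal P k) {y : reesAlgebra I}
    (hy : (y : R[X]) = monomial k a) : y ∈ P :=
  (mem_degreeIdeal_iff.1 ha).2 y hy

theorem mul_mem_degreeIdeal {l : ℕ} {b : R} (ha : a ∈ degreeIdeal P k) (hb : b ∈ I ^ l) :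
    a * b ∈ degreeIdeal P (k + l) := by
  obtain ⟨ha, haP⟩ := ha
  refine ⟨pow_add I k l ▸ Ideal.mul_mem_mul ha hb, ?_⟩
  convert P.mul_mem_right ⟨monomial l b, monomial_mem.2 hb⟩ haP
  simp [monomial_mul_monomial]

theorem degreeIdeal_mul_pow_le (l : ℕ) : degreeIdeal P k * I ^ l ≤ degreeIdeal P (k + l) :=
  Ideal.mul_le.2 fun _ ha _ hb ↦ mul_mem_degreeIdeal ha hb

theorem pow_succ_le_degreeIdeal {J : Ideal R} (hJI : J ≤ I) (hJP : J ≤ degreeIdeal P 1) (k : ℕ) :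
    J ^ (k + 1) ≤ degreeIdeal P (k + 1) :=
  calc J ^ (k + 1) = J * J ^ k := pow_succ' J k
    _ ≤ degreeIdeal P 1 * I ^ k := Ideal.mul_mono hJP (Ideal.pow_right_mono hJI k)
    _ ≤ degreeIdeal P (k + 1) := add_comm 1 k ▸ degreeIdeal_mul_pow_le k

theorem mem_degreeIdeal_one_of_idealIntegral (hP : P.IsPrime) {J : Ideal R} (hJI : J ≤ I)
    (hJP : J ≤ degreeIdeal P 1) {h : R} (hint : IdealIntegral J h) (hh : h ∈ I) :
    h ∈ degreeIdeal P 1 := by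
  obtain ⟨d, -, c, hc, heq⟩ := hint
  have hpow : h ^ d ∈ degreeIdeal P d := by
    rw [eq_neg_of_add_eq_zero_left heq]
    refine neg_mem (Ideal.sum_mem _ fun j hj ↦ ?_)
    have hjd : j + 1 ≤ d := Finset.mem_range.1 hj
    have hcj := pow_succ_le_degreeIdeal hJI hJP j (hc (j + 1) (Nat.le_add_left 1 j) hjd)
    simpa only [Nat.add_sub_cancel' hjd] using
      mul_mem_degreeIdeal hcj (Ideal.pow_mem_pow hh (d - (j + 1)))
  let x : reesAlgebra I := ⟨monomial 1 h, monomial_mem.2 (by simpa using hh)⟩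
  have hx : x ^ d ∈ P := mem_of_coe_eq_monomial hpow (by simp [x, monomial_pow])
  exact ⟨by simpa using hh, hP.mem_of_pow_mem d hx⟩

end reesAlgebra

open reesAlgebra in
theorem stmt2_general {R : Type*} [CommRing R] {n : ℕ} (f : Fin n → R) (h : R)
    (hint : IdealIntegral (Ideal.span (Set.range f)) h)
    (I' : Ideal R) (hI' : I' = Ideal.span (Set.range f) ⊔ Ideal.span {h})
    (P : Ideal (reesAlgebra I')) (hP : P.IsPrime)
    -- `f i * t ∈ P` for all `i`
    (hfP : ∀ i : Fin n, ∀ y : reesAlgebra I',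
      (y : R[X]) = Polynomial.C (f i) * Polynomial.X → y ∈ P) :
    -- then `h * t ∈ P`
    ∀ y : reesAlgebra I', (y : R[X]) = Polynomial.C h * Polynomial.X → y ∈ P := by
  have hJI : Ideal.span (Set.range f) ≤ I' := hI' ▸ le_sup_left
  have hJP : Ideal.span (Set.range f) ≤ degreeIdeal P 1 := by
    refine Ideal.span_le.2 ?_
    rintro _ ⟨i, rfl⟩
    refine mem_degreeIdeal_iff.2 ⟨by simpa using hJI (Ideal.subset_span ⟨i, rfl⟩), fun y hy ↦ ?_⟩
    exact hfP i y (by rw [hy, C_mul_X_eq_monomial])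
  have hh : h ∈ I' := hI' ▸ Ideal.mem_sup_right (Ideal.mem_span_singleton_self h)
  intro y hy
  exact mem_of_coe_eq_monomial (mem_degreeIdeal_one_of_idealIntegral hP hJI hJP hint hh)
    (by rw [hy, C_mul_X_eq_monomial])

/-- If `h` is integral over `J = (f 1, …, f n)`, then in the Rees algebra `R[(J,h)t]`
any homogeneous prime ideal containing `f i * t` for all `i` also contains `h * t`. -/
theorem stmt2 {R : Type*} [CommRing R] {n : ℕ} (f : Fin n → R) (h : R)
    (hint : IdealIntegral (Ideal.span (Set.range f)) h)
    (I' : Ideal R) (hI' : I' = Ideal.span (Set.range f) ⊔ Ideal.span {h})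
    (P : Ideal (reesAlgebra I')) (hP : P.IsPrime)
    -- `P` is homogeneous: it contains each graded component of each of its elements
    (hhom : ∀ x ∈ P, ∀ k : ℕ, ∀ y : reesAlgebra I',
      (y : R[X]) = Polynomial.monomial k ((x : R[X]).coeff k) → y ∈ P)
    -- `f i * t ∈ P` for all `i`
    (hfP : ∀ i : Fin n, ∀ y : reesAlgebra I',
      (y : R[X]) = Polynomial.C (f i) * Polynomial.X → y ∈ P) :
    -- then `h * t ∈ P`
    ∀ y : reesAlgebra I', (y : R[X]) = Polynomial.C h * Polynomial.X → y ∈ P :=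
  stmt2_general f h hint I' hI' P hP hfP
end

section
/- Let R be a Noetherian reduced ring and R ⊆ S a finite birational extension (S contained in the total ring of fractions of R). If the inclusion R → S splits as a map of R-modules, then S = R. Consequently, every birational derived splinter is a normal ring. -/
/-!
Write `s ∈ S` as `a / b` with `b` a non-zero-divisor. Then `b • s = a • 1` holds in `S`, so applying
the splitting gives `b * φ s = a`, i.e. `φ s = a / b = s` in the fraction ring. Hence every element
of `S` comes from `R`.
-/

theorem IsLocalization.algebraMap_apply_of_splitting {R K : Type*} [CommRing R] [CommRing K]
    [Algebra R K] (M : Submonoid R) [IsLocalization M K] {S : Subalgebra R K}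
    (φ : S →ₗ[R] R) (hφ : φ 1 = 1) (s : S) :
    algebraMap R K (φ s) = s := by
  obtain ⟨⟨a, b⟩, hab⟩ := IsLocalization.surj M (s : K)
  have h_smul : (b : R) • s = a • (1 : S) := by
    ext
    simpa [Algebra.smul_def, mul_comm] using hab
  have h_mul : (b : R) * φ s = a := by
    simpa only [map_smul, hφ, smul_eq_mul, mul_one] using congrArg φ h_smul
  refine (IsLocalization.map_units K b).mul_left_cancel ?_
  rw [← map_mul, h_mul, ← hab, mul_comm]

theorem IsLocalization.subalgebra_eq_bot_of_splitting {R K : Type*} [CommRing R] [CommRing K]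
    [Algebra R K] (M : Submonoid R) [IsLocalization M K] (S : Subalgebra R K)
    (φ : S →ₗ[R] R) (hφ : φ 1 = 1) :
    S = ⊥ :=
  eq_bot_iff.mpr fun s hs =>
    Algebra.mem_bot.mpr ⟨φ ⟨s, hs⟩, algebraMap_apply_of_splitting M φ hφ ⟨s, hs⟩⟩

theorem stmt7_general {R : Type*} [CommRing R]
    (S : Subalgebra R (FractionRing R))
    (φ : S →ₗ[R] R) (hφ : φ 1 = 1) :
    S = ⊥ :=
  IsLocalization.subalgebra_eq_bot_of_splitting (nonZeroDivisors R) S φ hφ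

/-- Let `R` be a Noetherian reduced ring and `R ⊆ S` a finite birational extension,
i.e. `S` is an `R`-subalgebra of the total ring of fractions of `R` which is finite as an
`R`-module.  If the inclusion `R → S` splits as a map of `R`-modules, then `S = R`. -/
theorem stmt7 {R : Type*} [CommRing R] [IsNoetherianRing R] [IsReduced R]
    (S : Subalgebra R (FractionRing R)) (hfin : Module.Finite R S)
    (φ : S →ₗ[R] R) (hφ : φ 1 = 1) :
    S = ⊥ :=
  stmt7_general S φ hφ
end
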